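/- Let E be a finite set, (X_i) any sequence in E, a : [1,∞) → (0,∞) continuous, a_i = a(i), r_n = Σ_{i=1}^n a_i, v_n = (1/n)Σ_{i=1}^n δ_{X_i} and w_n = (1/r_n)Σ_{i=1}^n a_i δ_{X_i}. Assume either (i) a is nondecreasing and lim_{t→∞} a(ts)/a(t) = 1 for every s ∈ (0,1], or (ii) a is decreasing, lim_{t→∞} a(ts)/a(t) = 1 for every s ∈ (0,1], and there is a measurable b : (0,1] → ℝ⁺ with ∫_0^1 b(s)ds < ∞ and 0 ≤ a(ts)/a(t) − 1 ≤ b(s) for all s ∈ (0,1] and t ≥ 1. Then max_x |w_n(x) − v_n(x)| → 0 as n → ∞. -/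

import Mathlib

open Filter Topology

/-- `|f| = max_x |f(x)|`. -/
noncomputable def vecAbs {E : Type*} [Fintype E] [Nonempty E] (f : E → ℝ) : ℝ :=
  Finset.univ.sup' Finset.univ_nonempty fun x => |f x|

section stmt12aux
open Finset MeasureTheory

lemma stmt12_vecAbs_nonneg {E : Type*} [Fintype E] [Nonempty E] (f : E → ℝ) :
    0 ≤ vecAbs f := by
  unfold vecAbs
  exact le_trans (abs_nonneg (f (Classical.arbitrary E)))
    (Finset.le_sup' (fun x => |f x|) (Finset.mem_univ _))

lemma stmt12_vecAbs_le {E : Type*} [Fintype E] [Nonempty E] (f : E → ℝ) (M : ℝ)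
    (h : ∀ x, |f x| ≤ M) : vecAbs f ≤ M := by
  unfold vecAbs
  exact Finset.sup'_le _ _ fun x _ => h x

lemma stmt12_abel (a d : ℕ → ℝ) (n : ℕ) :
    (∑ i ∈ Icc 1 (n+1), a i * d i)
      - ((∑ i ∈ Icc 1 (n+1), a i) / ((n:ℝ)+1)) * (∑ i ∈ Icc 1 (n+1), d i)
    = -∑ j ∈ Icc 1 n, ((∑ i ∈ Icc 1 j, a i) - (j:ℝ) * a (j+1)) *
        ((∑ i ∈ Icc 1 (j+1), d i)/((j:ℝ)+1) - (∑ i ∈ Icc 1 j, d i)/(j:ℝ)) := by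
  induction n with
  | zero => norm_num [Finset.Icc_self]
  | succ n ih =>
    have e1 : ∑ i ∈ Icc 1 (n+1+1), a i * d i
        = (∑ i ∈ Icc 1 (n+1), a i * d i) + a (n+1+1) * d (n+1+1) :=
      Finset.sum_Icc_succ_top (by omega) _
    have e2 : ∑ i ∈ Icc 1 (n+1+1), a i
        = (∑ i ∈ Icc 1 (n+1), a i) + a (n+1+1) :=
      Finset.sum_Icc_succ_top (by omega) _
    have e3 : ∑ i ∈ Icc 1 (n+1+1), d i
        = (∑ i ∈ Icc 1 (n+1), d i) + d (n+1+1) :=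
      Finset.sum_Icc_succ_top (by omega) _
    have e4 : ∑ j ∈ Icc 1 (n+1), ((∑ i ∈ Icc 1 j, a i) - (j:ℝ) * a (j+1)) *
        ((∑ i ∈ Icc 1 (j+1), d i)/((j:ℝ)+1) - (∑ i ∈ Icc 1 j, d i)/(j:ℝ))
        = (∑ j ∈ Icc 1 n, ((∑ i ∈ Icc 1 j, a i) - (j:ℝ) * a (j+1)) *
            ((∑ i ∈ Icc 1 (j+1), d i)/((j:ℝ)+1) - (∑ i ∈ Icc 1 j, d i)/(j:ℝ)))
          + ((∑ i ∈ Icc 1 (n+1), a i) - ((n+1:ℕ):ℝ) * a (n+1+1)) *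
            ((∑ i ∈ Icc 1 (n+1+1), d i)/(((n+1:ℕ):ℝ)+1) - (∑ i ∈ Icc 1 (n+1), d i)/((n+1:ℕ):ℝ)) :=
      Finset.sum_Icc_succ_top (by omega) _
    rw [e4, e3, e1, e2]
    set L := ∑ i ∈ Icc 1 (n+1), a i * d i with hL
    set R := ∑ i ∈ Icc 1 (n+1), a i with hR
    set S := ∑ i ∈ Icc 1 (n+1), d i with hS
    set Sg := ∑ j ∈ Icc 1 n, ((∑ i ∈ Icc 1 j, a i) - (j:ℝ) * a (j+1)) *
        ((∑ i ∈ Icc 1 (j+1), d i)/((j:ℝ)+1) - (∑ i ∈ Icc 1 j, d i)/(j:ℝ)) with hSg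
    have hSg : Sg = (R/((n:ℝ)+1))*S - L := by linarith [ih]
    rw [hSg]
    have h1 : ((n:ℝ)+1) ≠ 0 := by positivity
    have h2 : ((n:ℝ)+1+1) ≠ 0 := by positivity
    push_cast
    field_simp
    ring

lemma stmt12_delta (d : ℕ → ℝ) (hd : ∀ i, 0 ≤ d i ∧ d i ≤ 1) (j : ℕ) (hj : 1 ≤ j) :
    |(∑ i ∈ Icc 1 (j+1), d i)/((j:ℝ)+1) - (∑ i ∈ Icc 1 j, d i)/(j:ℝ)| ≤ 1/(j:ℝ) := by
  have hjR : (0:ℝ) < j := by exact_mod_cast hj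
  set s := ∑ i ∈ Icc 1 j, d i with hs
  have hs0 : 0 ≤ s := Finset.sum_nonneg fun i _ => (hd i).1
  have hs1 : s ≤ j := by
    calc s ≤ (Icc 1 j).card • (1:ℝ) := Finset.sum_le_card_nsmul _ _ _ fun i _ => (hd i).2
    _ = j := by simp [Nat.card_Icc]
  have e : ∑ i ∈ Icc 1 (j+1), d i = s + d (j+1) := Finset.sum_Icc_succ_top (by omega) _
  have key : (s + d (j+1))/((j:ℝ)+1) - s/(j:ℝ)
      = ((j:ℝ) * d (j+1) - s)/((j:ℝ)*((j:ℝ)+1)) := by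
    field_simp; ring
  rw [e, key, abs_div, abs_of_pos (by positivity : (0:ℝ) < (j:ℝ)*((j:ℝ)+1))]
  have hnum : |(j:ℝ) * d (j+1) - s| ≤ (j:ℝ) := by
    have := (hd (j+1)).1; have := (hd (j+1)).2
    rw [abs_le]; constructor <;> nlinarith
  calc |(j:ℝ) * d (j+1) - s| / ((j:ℝ)*((j:ℝ)+1)) ≤ (j:ℝ) / ((j:ℝ)*((j:ℝ)+1)) := by gcongr
  _ ≤ 1/(j:ℝ) := by rw [div_le_div_iff₀ (by positivity) hjR]; nlinarith

lemma stmt12_bound (a d : ℕ → ℝ) (hd : ∀ i, 0 ≤ d i ∧ d i ≤ 1)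
    (hapos : ∀ i : ℕ, 1 ≤ i → 0 < a i) (n : ℕ) :
    |(∑ i ∈ Icc 1 (n+1), a i)⁻¹ * (∑ i ∈ Icc 1 (n+1), a i * d i)
      - (((n:ℝ)+1))⁻¹ * (∑ i ∈ Icc 1 (n+1), d i)|
    ≤ (∑ j ∈ Icc 1 n, |(∑ i ∈ Icc 1 j, a i)/(j:ℝ) - a (j+1)|) / (∑ i ∈ Icc 1 (n+1), a i) := by
  have hr : 0 < ∑ i ∈ Icc 1 (n+1), a i := by
    apply Finset.sum_pos (fun i hi => hapos i (Finset.mem_Icc.mp hi).1)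
    exact ⟨1, by simp⟩
  set r := ∑ i ∈ Icc 1 (n+1), a i with hrdef
  have e : r⁻¹ * (∑ i ∈ Icc 1 (n+1), a i * d i) - (((n:ℝ)+1))⁻¹ * (∑ i ∈ Icc 1 (n+1), d i)
      = ((∑ i ∈ Icc 1 (n+1), a i * d i)
          - (r / ((n:ℝ)+1)) * (∑ i ∈ Icc 1 (n+1), d i)) / r := by
    field_simp
  rw [e, stmt12_abel, abs_div, abs_of_pos hr, abs_neg]
  gcongr
  calc |∑ j ∈ Icc 1 n, ((∑ i ∈ Icc 1 j, a i) - (j:ℝ) * a (j+1)) *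
        ((∑ i ∈ Icc 1 (j+1), d i)/((j:ℝ)+1) - (∑ i ∈ Icc 1 j, d i)/(j:ℝ))|
      ≤ ∑ j ∈ Icc 1 n, |((∑ i ∈ Icc 1 j, a i) - (j:ℝ) * a (j+1)) *
        ((∑ i ∈ Icc 1 (j+1), d i)/((j:ℝ)+1) - (∑ i ∈ Icc 1 j, d i)/(j:ℝ))| :=
        Finset.abs_sum_le_sum_abs _ _
  _ ≤ ∑ j ∈ Icc 1 n, |(∑ i ∈ Icc 1 j, a i)/(j:ℝ) - a (j+1)| := by
      apply Finset.sum_le_sum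
      intro j hj
      have hj1 : 1 ≤ j := (Finset.mem_Icc.mp hj).1
      have hjR : (0:ℝ) < j := by exact_mod_cast hj1
      rw [abs_mul]
      calc |(∑ i ∈ Icc 1 j, a i) - (j:ℝ) * a (j+1)| *
            |(∑ i ∈ Icc 1 (j+1), d i)/((j:ℝ)+1) - (∑ i ∈ Icc 1 j, d i)/(j:ℝ)|
          ≤ |(∑ i ∈ Icc 1 j, a i) - (j:ℝ) * a (j+1)| * (1/(j:ℝ)) := by
            gcongr; exact stmt12_delta d hd j hj1
      _ = |(∑ i ∈ Icc 1 j, a i)/(j:ℝ) - a (j+1)| := by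
            rw [← abs_of_pos (show (0:ℝ) < 1/(j:ℝ) by positivity), ← abs_mul]
            congr 1; field_simp

lemma stmt12_cesaro (A c : ℕ → ℝ) (hA : ∀ j, 1 ≤ j → 0 < A j)
    (hc : ∀ j, 0 ≤ c j)
    (h2 : Filter.Tendsto (fun j => c j / A j) atTop (nhds 0))
    (h3 : Filter.Tendsto (fun n => ∑ i ∈ Icc 1 n, A i) atTop atTop) :
    Filter.Tendsto (fun n : ℕ => (∑ j ∈ Icc 1 (n-1), c j) / (∑ i ∈ Icc 1 n, A i))
      atTop (nhds 0) := by
  rw [Metric.tendsto_atTop]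
  intro ε hε
  have hε2 : 0 < ε/2 := by positivity
  obtain ⟨N1, hN1⟩ := (Metric.tendsto_atTop.mp h2) (ε/2) hε2
  set N := max N1 1 with hN
  have hkey : ∀ j, N ≤ j → c j ≤ (ε/2) * A j := by
    intro j hj
    have h := hN1 j (le_trans (le_max_left _ _) hj)
    have hAj : 0 < A j := hA j (le_trans (le_max_right _ _) hj)
    rw [Real.dist_eq, sub_zero, abs_of_nonneg (div_nonneg (hc j) hAj.le)] at h
    calc c j = (c j / A j) * A j := (div_mul_cancel₀ _ hAj.ne').symm
    _ ≤ (ε/2) * A j := mul_le_mul_of_nonneg_right h.le hAj.le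
  set K := ∑ j ∈ Icc 1 N, c j with hK
  have hK0 : 0 ≤ K := Finset.sum_nonneg fun j _ => hc j
  obtain ⟨N2, hN2⟩ := Filter.eventually_atTop.mp (h3.eventually_ge_atTop (max (2*K/ε + 1) 1))
  refine ⟨max N2 (N+2), fun n hn => ?_⟩
  have hn2 : N2 ≤ n := le_trans (le_max_left _ _) hn
  have hnN : N + 2 ≤ n := le_trans (le_max_right _ _) hn
  have hrn := hN2 n hn2
  have hrpos : 0 < ∑ i ∈ Icc 1 n, A i := lt_of_lt_of_le (by norm_num) (le_trans (le_max_right _ _) hrn)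
  have hrK : 2*K/ε + 1 ≤ ∑ i ∈ Icc 1 n, A i := le_trans (le_max_left _ _) hrn
  -- split the numerator
  have hsplit : ∑ j ∈ Icc 1 (n-1), c j ≤ K + (ε/2) * ∑ i ∈ Icc 1 n, A i := by
    have h1 : Icc 1 (n-1) = Ioc 0 (n-1) := by rw [← Finset.Icc_add_one_left_eq_Ioc, zero_add]
    have h2' : Icc 1 N = Ioc 0 N := by rw [← Finset.Icc_add_one_left_eq_Ioc, zero_add]
    have hsum : ∑ j ∈ Ioc 0 (n-1), c j
        = (∑ j ∈ Ioc 0 N, c j) + ∑ j ∈ Ioc N (n-1), c j :=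
      (Finset.sum_Ioc_consecutive _ (by omega) (by omega)).symm
    rw [h1, hsum, ← h2']
    gcongr
    calc ∑ j ∈ Ioc N (n-1), c j ≤ ∑ j ∈ Ioc N (n-1), (ε/2) * A j := by
          apply Finset.sum_le_sum
          intro j hj
          exact hkey j (le_of_lt (Finset.mem_Ioc.mp hj).1)
    _ = (ε/2) * ∑ j ∈ Ioc N (n-1), A j := by rw [Finset.mul_sum]
    _ ≤ (ε/2) * ∑ i ∈ Icc 1 n, A i := by
          have hsub : Ioc N (n-1) ⊆ Icc 1 n := by
            intro j hj
            rw [Finset.mem_Ioc] at hj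
            rw [Finset.mem_Icc]
            omega
          have := Finset.sum_le_sum_of_subset_of_nonneg hsub
            (fun i hi _ => (hA i (Finset.mem_Icc.mp hi).1).le)
          exact mul_le_mul_of_nonneg_left this hε2.le
  have hnum0 : 0 ≤ ∑ j ∈ Icc 1 (n-1), c j := Finset.sum_nonneg fun j _ => hc j
  rw [Real.dist_eq, sub_zero, abs_of_nonneg (div_nonneg hnum0 hrpos.le)]
  rw [div_lt_iff₀ hrpos]
  have h2K : 2*K/ε * ε = 2*K := div_mul_cancel₀ _ hε.ne'
  have hmul := mul_le_mul_of_nonneg_left hrK (le_of_lt hε2)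
  nlinarith [hsplit, hmul, h2K, hε]

lemma stmt12_svnat (a : ℝ → ℝ) (s : ℝ)
    (h : Tendsto (fun t : ℝ => a (t * s) / a t) atTop (nhds 1)) :
    Tendsto (fun j : ℕ => a (s * (j:ℝ)) / a (j:ℝ)) atTop (nhds 1) := by
  have h2 := h.comp (tendsto_natCast_atTop_atTop (R := ℝ))
  exact h2.congr fun j => by simp [Function.comp, mul_comm]

lemma stmt12_double (a : ℝ → ℝ)
    (h : Tendsto (fun t : ℝ => a (t * (1/2)) / a t) atTop (nhds 1)) :
    Tendsto (fun j : ℕ => a (2 * (j:ℝ)) / a (j:ℝ)) atTop (nhds 1) := by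
  have hcomp : Tendsto (fun j : ℕ => 2*(j:ℝ)) atTop atTop :=
    (tendsto_natCast_atTop_atTop (R := ℝ)).const_mul_atTop (by norm_num)
  have h2 := h.comp hcomp
  have h3 : Tendsto (fun j : ℕ => a (j:ℝ) / a (2*(j:ℝ))) atTop (nhds 1) := by
    refine h2.congr fun j => ?_
    have : 2*(j:ℝ) * (1/2) = (j:ℝ) := by ring
    simp only [Function.comp, this]
  have h4 := h3.inv₀ one_ne_zero
  rw [inv_one] at h4
  exact h4.congr fun j => by rw [inv_div]

lemma stmt12_case1 (a : ℝ → ℝ) (hapos : ∀ t > (0:ℝ), 0 < a t)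
    (mono : MonotoneOn a (Set.Ioi (0:ℝ)))
    (hsv : ∀ s ∈ Set.Ioc (0:ℝ) 1,
      Tendsto (fun t : ℝ => a (t * s) / a t) atTop (nhds 1)) :
    Tendsto (fun j : ℕ => a ((j:ℝ)+1) / a (j:ℝ)) atTop (nhds 1) ∧
    Tendsto (fun j : ℕ => (∑ i ∈ Icc 1 j, a (i:ℝ)) / ((j:ℝ) * a (j:ℝ))) atTop (nhds 1) ∧
    Tendsto (fun n : ℕ => ∑ i ∈ Icc 1 n, a (i:ℝ)) atTop atTop := by
  have hdouble := stmt12_double a (hsv (1/2) (by norm_num))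
  have hpos : ∀ j : ℕ, 1 ≤ j → 0 < a (j:ℝ) := fun j hj =>
    hapos _ (by exact_mod_cast hj)
  refine ⟨?_, ?_, ?_⟩
  · -- step ratio
    apply tendsto_of_tendsto_of_tendsto_of_le_of_le' tendsto_const_nhds hdouble
    · filter_upwards [eventually_ge_atTop 1] with j hj
      have hj0 : (0:ℝ) < j := by exact_mod_cast hj
      rw [le_div_iff₀ (hpos j hj), one_mul]
      exact mono (Set.mem_Ioi.mpr hj0) (Set.mem_Ioi.mpr (by linarith)) (by linarith)
    · filter_upwards [eventually_ge_atTop 1] with j hj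
      have hj0 : (0:ℝ) < j := by exact_mod_cast hj
      have hj1 : (1:ℝ) ≤ j := by exact_mod_cast hj
      have hnum : a ((j:ℝ)+1) ≤ a (2*(j:ℝ)) :=
        mono (Set.mem_Ioi.mpr (by linarith)) (Set.mem_Ioi.mpr (by linarith)) (by linarith)
      have haj := hpos j hj
      gcongr
  · -- ratio r_j/(j a_j) → 1
    rw [tendsto_order]
    constructor
    · intro cc hcc
      set s : ℝ := min ((1-cc)/3) (1/2) with hsdef
      have hs0 : 0 < s := by
        apply lt_min (by linarith) (by norm_num)
      have hs12 : s ≤ 1/2 := min_le_right _ _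
      have hscc : cc < (1-s)*(1-s) := by
        have h1 : s ≤ (1-cc)/3 := min_le_left _ _
        nlinarith
      have hlim := stmt12_svnat a s (hsv s ⟨hs0, by linarith⟩)
      have hev := hlim.eventually (eventually_gt_nhds (show (1:ℝ)-s < 1 by linarith))
      filter_upwards [hev, eventually_ge_atTop 2] with j hy hj2
      have hj1 : 1 ≤ j := by omega
      have hj0 : (0:ℝ) < j := by exact_mod_cast hj1
      have hsj0 : 0 < s * (j:ℝ) := by positivity
      have haj := hpos j hj1
      have hasj := hapos _ hsj0
      -- count bound : (1-s) * (j * a (s*j)) ≤ r_j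
      have hcount : (1-s) * ((j:ℝ) * a (s*(j:ℝ))) ≤ ∑ i ∈ Icc 1 j, a (i:ℝ) := by
        set m : ℕ := max (⌈s*(j:ℝ)⌉₊) 1 with hmdef
        have hm1 : 1 ≤ m := le_max_right _ _
        have hceil : (⌈s*(j:ℝ)⌉₊ : ℕ) ≤ j := by
          rw [Nat.ceil_le]
          calc s*(j:ℝ) ≤ 1*(j:ℝ) := by nlinarith
          _ = (j:ℝ) := one_mul _
        have hmj : m ≤ j := max_le hceil hj1
        have hsub : Icc m j ⊆ Icc 1 j := Finset.Icc_subset_Icc hm1 le_rfl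
        have h1 : ∑ i ∈ Icc m j, a (i:ℝ) ≤ ∑ i ∈ Icc 1 j, a (i:ℝ) :=
          Finset.sum_le_sum_of_subset_of_nonneg hsub
            (fun i hi _ => (hpos i (Finset.mem_Icc.mp hi).1).le)
        have h2 : (Icc m j).card • a (s*(j:ℝ)) ≤ ∑ i ∈ Icc m j, a (i:ℝ) := by
          apply Finset.card_nsmul_le_sum
          intro i hi
          obtain ⟨hi1, hi2⟩ := Finset.mem_Icc.mp hi
          have hi1' : 1 ≤ i := le_trans hm1 hi1
          have : s*(j:ℝ) ≤ (i:ℝ) := by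
            calc s*(j:ℝ) ≤ (⌈s*(j:ℝ)⌉₊ : ℝ) := Nat.le_ceil _
            _ ≤ (m:ℝ) := by exact_mod_cast le_max_left _ _
            _ ≤ (i:ℝ) := by exact_mod_cast hi1
          exact mono (Set.mem_Ioi.mpr hsj0) (Set.mem_Ioi.mpr (by exact_mod_cast hi1')) this
        have hcard : (Icc m j).card = j + 1 - m := Nat.card_Icc m j
        have hmR : (m:ℝ) ≤ s*(j:ℝ) + 1 := by
          have h3 : (⌈s*(j:ℝ)⌉₊ : ℝ) < s*(j:ℝ) + 1 := Nat.ceil_lt_add_one hsj0.le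
          have h4 : (1:ℝ) ≤ s*(j:ℝ) + 1 := by linarith
          have : (m:ℝ) = max ((⌈s*(j:ℝ)⌉₊:ℕ):ℝ) 1 := by
            rw [hmdef]; push_cast [Nat.cast_max]; norm_num
          rw [this]
          exact max_le h3.le h4
        have hcardR : (1-s)*(j:ℝ) ≤ ((j + 1 - m : ℕ):ℝ) := by
          have : ((j + 1 - m : ℕ):ℝ) = (j:ℝ) + 1 - (m:ℝ) := by
            push_cast [Nat.cast_sub (by omega : m ≤ j + 1)]; ring
          rw [this]; linarith
        calc (1-s) * ((j:ℝ) * a (s*(j:ℝ))) = ((1-s)*(j:ℝ)) * a (s*(j:ℝ)) := by ring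
        _ ≤ ((j + 1 - m : ℕ):ℝ) * a (s*(j:ℝ)) := by
            exact mul_le_mul_of_nonneg_right hcardR hasj.le
        _ = (Icc m j).card • a (s*(j:ℝ)) := by rw [hcard, nsmul_eq_mul]
        _ ≤ ∑ i ∈ Icc m j, a (i:ℝ) := h2
        _ ≤ ∑ i ∈ Icc 1 j, a (i:ℝ) := h1
      -- conclude
      rw [lt_div_iff₀ (by positivity)]
      calc cc * ((j:ℝ) * a (j:ℝ)) < ((1-s)*(1-s)) * ((j:ℝ) * a (j:ℝ)) := by
            apply mul_lt_mul_of_pos_right hscc (by positivity)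
      _ ≤ (1-s) * ((j:ℝ) * a (s*(j:ℝ))) := by
            have : (1-s) * a (j:ℝ) ≤ a (s*(j:ℝ)) := by
              rw [lt_div_iff₀ haj] at hy
              linarith [hy]
            have h5 := mul_le_mul_of_nonneg_left this
              (mul_nonneg (by linarith : (0:ℝ) ≤ 1-s) hj0.le)
            nlinarith [h5]
      _ ≤ ∑ i ∈ Icc 1 j, a (i:ℝ) := hcount
    · intro cc hcc
      filter_upwards [eventually_ge_atTop 1] with j hj
      have hj0 : (0:ℝ) < j := by exact_mod_cast hj
      have haj := hpos j hj
      have hupper : ∑ i ∈ Icc 1 j, a (i:ℝ) ≤ (j:ℝ) * a (j:ℝ) := by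
        calc ∑ i ∈ Icc 1 j, a (i:ℝ) ≤ (Icc 1 j).card • a (j:ℝ) := by
              apply Finset.sum_le_card_nsmul
              intro i hi
              obtain ⟨hi1, hi2⟩ := Finset.mem_Icc.mp hi
              exact mono (Set.mem_Ioi.mpr (by exact_mod_cast hi1))
                (Set.mem_Ioi.mpr hj0) (by exact_mod_cast hi2)
        _ = (j:ℝ) * a (j:ℝ) := by simp [Nat.card_Icc, nsmul_eq_mul]
      calc (∑ i ∈ Icc 1 j, a (i:ℝ)) / ((j:ℝ) * a (j:ℝ)) ≤ 1 := by
            rw [div_le_one (by positivity)]; exact hupper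
      _ < cc := hcc
  · -- r_n → ∞
    have h1 : ∀ n : ℕ, (n:ℝ) * a 1 ≤ ∑ i ∈ Icc 1 n, a (i:ℝ) := by
      intro n
      calc (n:ℝ) * a 1 = (Icc 1 n).card • a 1 := by simp [Nat.card_Icc, nsmul_eq_mul]
      _ ≤ ∑ i ∈ Icc 1 n, a (i:ℝ) := by
          apply Finset.card_nsmul_le_sum
          intro i hi
          have hi1 := (Finset.mem_Icc.mp hi).1
          exact mono (Set.mem_Ioi.mpr one_pos)
            (Set.mem_Ioi.mpr (by exact_mod_cast hi1)) (by exact_mod_cast hi1)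
    exact tendsto_atTop_mono h1
      ((tendsto_natCast_atTop_atTop (R := ℝ)).atTop_mul_const (hapos 1 one_pos))

lemma stmt12_case2 (a : ℝ → ℝ) (hapos : ∀ t > (0:ℝ), 0 < a t)
    (anti : StrictAntiOn a (Set.Ioi (0:ℝ)))
    (hsv : ∀ s ∈ Set.Ioc (0:ℝ) 1,
      Tendsto (fun t : ℝ => a (t * s) / a t) atTop (nhds 1))
    (b : ℝ → ℝ) (hbmeas : Measurable b)
    (hb0 : ∀ s ∈ Set.Ioc (0:ℝ) 1, 0 ≤ b s)
    (hbint : MeasureTheory.IntegrableOn b (Set.Ioc (0:ℝ) 1) MeasureTheory.volume)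
    (hdom : ∀ s ∈ Set.Ioc (0:ℝ) 1, ∀ t ≥ (1:ℝ),
      0 ≤ a (t * s) / a t - 1 ∧ a (t * s) / a t - 1 ≤ b s) :
    Tendsto (fun j : ℕ => a ((j:ℝ)+1) / a (j:ℝ)) atTop (nhds 1) ∧
    Tendsto (fun j : ℕ => (∑ i ∈ Icc 1 j, a (i:ℝ)) / ((j:ℝ) * a (j:ℝ))) atTop (nhds 1) ∧
    Tendsto (fun n : ℕ => ∑ i ∈ Icc 1 n, a (i:ℝ)) atTop atTop := by
  have hanti : AntitoneOn a (Set.Ioi (0:ℝ)) := anti.antitoneOn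
  have hdouble := stmt12_double a (hsv (1/2) (by norm_num))
  have hpos : ∀ j : ℕ, 1 ≤ j → 0 < a (j:ℝ) := fun j hj => hapos _ (by exact_mod_cast hj)
  -- lower bound r_j ≥ j a_j
  have hlowr : ∀ j : ℕ, 1 ≤ j → (j:ℝ) * a (j:ℝ) ≤ ∑ i ∈ Icc 1 j, a (i:ℝ) := by
    intro j hj
    have hj0 : (0:ℝ) < j := by exact_mod_cast hj
    calc (j:ℝ) * a (j:ℝ) = (Icc 1 j).card • a (j:ℝ) := by simp [Nat.card_Icc, nsmul_eq_mul]
    _ ≤ ∑ i ∈ Icc 1 j, a (i:ℝ) := by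
        apply Finset.card_nsmul_le_sum
        intro i hi
        obtain ⟨hi1, hi2⟩ := Finset.mem_Icc.mp hi
        exact hanti (Set.mem_Ioi.mpr (by exact_mod_cast hi1)) (Set.mem_Ioi.mpr hj0)
          (by exact_mod_cast hi2)
  constructor
  · -- step ratio
    apply tendsto_of_tendsto_of_tendsto_of_le_of_le' hdouble tendsto_const_nhds
    · filter_upwards [eventually_ge_atTop 1] with j hj
      have hj1 : (1:ℝ) ≤ j := by exact_mod_cast hj
      have hnum : a (2*(j:ℝ)) ≤ a ((j:ℝ)+1) :=
        hanti (Set.mem_Ioi.mpr (by linarith)) (Set.mem_Ioi.mpr (by linarith)) (by linarith)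
      have haj := hpos j hj
      gcongr
    · filter_upwards [eventually_ge_atTop 1] with j hj
      have hj1 : (1:ℝ) ≤ j := by exact_mod_cast hj
      have haj := hpos j hj
      rw [div_le_one haj]
      exact hanti (Set.mem_Ioi.mpr (by linarith)) (Set.mem_Ioi.mpr (by linarith)) (by linarith)
  constructor
  · -- main ratio
    -- B construction
    set B : ℝ → ℝ := fun s => sSup ((fun t => a (t*s)/a t - 1) '' (Set.Ici 1)) with hBdef
    have hne : ∀ s : ℝ, ((fun t => a (t*s)/a t - 1) '' (Set.Ici 1)).Nonempty :=
      fun s => ⟨a (1*s)/a 1 - 1, ⟨1, Set.mem_Ici.mpr le_rfl, rfl⟩⟩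
    have hbdd : ∀ s ∈ Set.Ioc (0:ℝ) 1, BddAbove ((fun t => a (t*s)/a t - 1) '' (Set.Ici 1)) := by
      intro s hs
      refine ⟨b s, ?_⟩
      rintro y ⟨t, ht, rfl⟩
      exact (hdom s hs t ht).2
    have hBub : ∀ s ∈ Set.Ioc (0:ℝ) 1, ∀ t ≥ (1:ℝ), a (t*s)/a t - 1 ≤ B s := by
      intro s hs t ht
      exact le_csSup (hbdd s hs) ⟨t, ht, rfl⟩
    have hBle : ∀ s ∈ Set.Ioc (0:ℝ) 1, B s ≤ b s := by
      intro s hs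
      apply csSup_le (hne s)
      rintro y ⟨t, ht, rfl⟩
      exact (hdom s hs t ht).2
    have hB0 : ∀ s ∈ Set.Ioc (0:ℝ) 1, 0 ≤ B s := by
      intro s hs
      exact le_trans (hdom s hs 1 le_rfl).1 (hBub s hs 1 le_rfl)
    have hBanti : AntitoneOn B (Set.Ioc (0:ℝ) 1) := by
      intro s1 hs1 s2 hs2 h12
      apply csSup_le (hne s2)
      rintro y ⟨t, ht, rfl⟩
      have ht0 : (0:ℝ) < t := lt_of_lt_of_le one_pos ht
      have h1 : a (t*s2) ≤ a (t*s1) :=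
        hanti (Set.mem_Ioi.mpr (mul_pos ht0 hs1.1)) (Set.mem_Ioi.mpr (mul_pos ht0 hs2.1))
          (by nlinarith [hs1.1])
      refine le_trans ?_ (hBub s1 hs1 t ht)
      have hat := hapos t ht0
      have h2 : a (t*s2)/a t ≤ a (t*s1)/a t := by gcongr
      linarith
    have hBmeas : AEMeasurable B (volume.restrict (Set.Ioc (0:ℝ) 1)) :=
      aemeasurable_restrict_of_antitoneOn measurableSet_Ioc hBanti
    have hBint : IntegrableOn B (Set.Ioc (0:ℝ) 1) volume := by
      apply Integrable.mono' hbint hBmeas.aestronglyMeasurable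
      rw [ae_restrict_iff' measurableSet_Ioc]
      filter_upwards with s hs
      rw [Real.norm_eq_abs, abs_of_nonneg (hB0 s hs)]
      exact hBle s hs
    have hInt0 : Tendsto (fun m : ℕ => ∫ x in Set.Ioc (0:ℝ) (1/((m:ℝ)+1)), B x)
        atTop (nhds 0) := by
      have hiter : (⋂ m : ℕ, Set.Ioc (0:ℝ) (1/((m:ℝ)+1))) = ∅ := by
        ext x
        simp only [Set.mem_iInter, Set.mem_Ioc, Set.mem_empty_iff_false, iff_false, not_forall]
        by_contra hcon
        push_neg at hcon
        have hx0 : 0 < x := (hcon 0).1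
        obtain ⟨m, hm⟩ := exists_nat_gt (1/x)
        have := (hcon m).2
        have h1 : 1/x < (m:ℝ)+1 := by linarith
        have := (div_lt_iff₀ hx0).mp h1
        have h2 : 1/((m:ℝ)+1) < x := by
          rw [div_lt_iff₀ (by positivity)]
          linarith [this]
        linarith [(hcon m).2]
      have := tendsto_setIntegral_of_antitone (f := B) (μ := volume)
        (s := fun m : ℕ => Set.Ioc (0:ℝ) (1/((m:ℝ)+1)))
        (fun m => measurableSet_Ioc)
        (fun m m' hmm => Set.Ioc_subset_Ioc le_rfl (by
          have hmm' : ((m:ℝ))+1 ≤ (m':ℝ)+1 := by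
            have : (m:ℝ) ≤ (m':ℝ) := by exact_mod_cast hmm
            linarith
          exact one_div_le_one_div_of_le (by positivity) hmm'))
        ⟨0, by norm_num; exact hBint⟩
      rw [hiter] at this
      simpa using this
    -- key inequality
    have hkeyineq : ∀ s0 ∈ Set.Ioc (0:ℝ) 1, ∀ j : ℕ, 1 ≤ j →
        (∑ i ∈ Icc 1 j, a (i:ℝ))/((j:ℝ) * a (j:ℝ)) - 1
          ≤ (∫ x in Set.Ioc (0:ℝ) s0, B x) + (a (s0*(j:ℝ))/a (j:ℝ) - 1) := by
      intro s0 hs0 j hj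
      have hj0 : (0:ℝ) < j := by exact_mod_cast hj
      have haj := hpos j hj
      set m : ℕ := ⌊s0 * (j:ℝ)⌋₊ with hmdef
      have hs0j : 0 < s0 * (j:ℝ) := mul_pos hs0.1 hj0
      have hmj : m ≤ j := Nat.floor_le_of_le (by nlinarith [hs0.2])
      have hmle : (m:ℝ) ≤ s0 * (j:ℝ) := Nat.floor_le hs0j.le
      have has0j : 0 < a (s0*(j:ℝ)) := hapos _ hs0j
      -- bound for the tail part
      have hbnd0 : (0:ℝ) ≤ a (s0*(j:ℝ))/a (j:ℝ) - 1 := by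
        have : a (j:ℝ) ≤ a (s0*(j:ℝ)) := by
          rcases eq_or_lt_of_le (show s0*(j:ℝ) ≤ (j:ℝ) by nlinarith [hs0.2]) with h | h
          · rw [h]
          · exact (anti (Set.mem_Ioi.mpr hs0j) (Set.mem_Ioi.mpr hj0) h).le
        rw [sub_nonneg, le_div_iff₀ haj, one_mul]
        exact this
      have heq : (∑ i ∈ Icc 1 j, a (i:ℝ))/((j:ℝ) * a (j:ℝ)) - 1
          = (∑ i ∈ Icc 1 j, (a (i:ℝ) / a (j:ℝ) - 1))/(j:ℝ) := by
        rw [Finset.sum_sub_distrib, Finset.sum_const, Nat.card_Icc, ← Finset.sum_div]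
        push_cast [Nat.cast_sub (by omega : 1 ≤ j + 1)]
        field_simp
        ring
      rw [heq]
      have hIcc : Icc 1 j = Ioc 0 j := by rw [← Finset.Icc_add_one_left_eq_Ioc, zero_add]
      have hsplit : ∑ i ∈ Icc 1 j, (a (i:ℝ) / a (j:ℝ) - 1)
          = (∑ i ∈ Ioc 0 m, (a (i:ℝ) / a (j:ℝ) - 1))
            + ∑ i ∈ Ioc m j, (a (i:ℝ) / a (j:ℝ) - 1) := by
        rw [hIcc]
        exact (Finset.sum_Ioc_consecutive _ (Nat.zero_le m) hmj).symm
      -- head part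
      have hhead : ∑ i ∈ Ioc 0 m, (a (i:ℝ) / a (j:ℝ) - 1)
          ≤ (j:ℝ) * ∫ x in Set.Ioc (0:ℝ) s0, B x := by
        -- each term ≤ B(i/j)
        have hterm : ∀ i ∈ Ioc 0 m, a (i:ℝ) / a (j:ℝ) - 1 ≤ B ((i:ℝ)/(j:ℝ)) := by
          intro i hi
          obtain ⟨hi0, him⟩ := Finset.mem_Ioc.mp hi
          have hij : (i:ℝ)/(j:ℝ) ∈ Set.Ioc (0:ℝ) 1 := by
            constructor
            · positivity
            · rw [div_le_one hj0]
              exact_mod_cast le_trans him hmj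
          have h := hBub _ hij (j:ℝ) (by exact_mod_cast hj)
          rwa [show (j:ℝ)*((i:ℝ)/(j:ℝ)) = (i:ℝ) by field_simp] at h
        -- piecewise integral comparison
        have hpiece : ∀ k : ℕ, k < m →
            B (((k:ℝ)+1)/(j:ℝ)) * (1/(j:ℝ))
              ≤ ∫ x in Set.Ioc ((k:ℝ)/(j:ℝ)) (((k:ℝ)+1)/(j:ℝ)), B x := by
          intro k hk
          have hkj : ((k:ℝ)+1)/(j:ℝ) ≤ 1 := by
            rw [div_le_one hj0]
            have : (k+1 : ℕ) ≤ j := le_trans hk hmj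
            exact_mod_cast this
          have hsub1 : Set.Ioc ((k:ℝ)/(j:ℝ)) (((k:ℝ)+1)/(j:ℝ)) ⊆ Set.Ioc (0:ℝ) 1 :=
            Set.Ioc_subset_Ioc (by positivity) hkj
          have hd : ((k:ℝ)+1)/(j:ℝ) - (k:ℝ)/(j:ℝ) = 1/(j:ℝ) := by
            field_simp
            ring
          have hvol : (volume (Set.Ioc ((k:ℝ)/(j:ℝ)) (((k:ℝ)+1)/(j:ℝ)))).toReal = 1/(j:ℝ) := by
            rw [Real.volume_Ioc, hd, ENNReal.toReal_ofReal (by positivity)]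
          have := setIntegral_ge_of_const_le (μ := volume) measurableSet_Ioc
            (by rw [Real.volume_Ioc]; exact ENNReal.ofReal_ne_top)
            (f := B) (c := B (((k:ℝ)+1)/(j:ℝ)))
            (fun x hx => by
              have hx1 : x ∈ Set.Ioc (0:ℝ) 1 := hsub1 hx
              have hkj1 : ((k:ℝ)+1)/(j:ℝ) ∈ Set.Ioc (0:ℝ) 1 := ⟨by positivity, hkj⟩
              exact hBanti hx1 hkj1 hx.2)
            (hBint.mono_set hsub1)
          rw [measureReal_def, hvol, smul_eq_mul, mul_comm] at this
          exact this
        -- adjacent intervals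
        have hint : ∀ k : ℕ, k < m → IntervalIntegrable B volume ((k:ℝ)/(j:ℝ)) (((k:ℝ)+1)/(j:ℝ)) := by
          intro k hk
          rw [intervalIntegrable_iff, Set.uIoc_of_le (by gcongr <;> linarith)]
          apply hBint.mono_set
          apply Set.Ioc_subset_Ioc (by positivity)
          rw [div_le_one hj0]
          have : (k+1 : ℕ) ≤ j := le_trans hk hmj
          exact_mod_cast this
        have hadj : ∑ k ∈ Finset.range m, ∫ x in ((k:ℝ)/(j:ℝ))..(((k:ℝ)+1)/(j:ℝ)), B x
            = ∫ x in (0:ℝ)..((m:ℝ)/(j:ℝ)), B x := by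
          have := intervalIntegral.sum_integral_adjacent_intervals
            (a := fun k : ℕ => (k:ℝ)/(j:ℝ)) (n := m) (μ := volume) (f := B)
            (fun k hk => by
              have h := hint k hk
              simpa [Nat.cast_add, Nat.cast_one, add_div] using h)
          simpa [Nat.cast_zero, zero_div, add_div] using this
        have hreindex : ∑ i ∈ Ioc 0 m, B ((i:ℝ)/(j:ℝ))
            = ∑ k ∈ Finset.range m, B (((k:ℝ)+1)/(j:ℝ)) := by
          rw [← Finset.Icc_add_one_left_eq_Ioc, ← Finset.Ico_add_one_right_eq_Icc, Finset.sum_Ico_eq_sum_range]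
          apply Finset.sum_congr (by norm_num)
          intro k _
          congr 1
          push_cast
          ring
        have hms0 : (m:ℝ)/(j:ℝ) ≤ s0 := by
          rw [div_le_iff₀ hj0]
          linarith [hmle]
        have hIocsub : Set.Ioc (0:ℝ) ((m:ℝ)/(j:ℝ)) ⊆ Set.Ioc (0:ℝ) s0 :=
          Set.Ioc_subset_Ioc le_rfl hms0
        have hIntS0 : IntegrableOn B (Set.Ioc (0:ℝ) s0) volume :=
          hBint.mono_set (Set.Ioc_subset_Ioc le_rfl hs0.2)
        have hmono : ∫ x in Set.Ioc (0:ℝ) ((m:ℝ)/(j:ℝ)), B x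
            ≤ ∫ x in Set.Ioc (0:ℝ) s0, B x := by
          apply setIntegral_mono_set hIntS0
          · show ∀ᵐ x ∂(volume.restrict (Set.Ioc (0:ℝ) s0)), (0:ℝ) ≤ B x
            rw [ae_restrict_iff' measurableSet_Ioc]
            filter_upwards with x hx
            exact hB0 x ⟨hx.1, le_trans hx.2 hs0.2⟩
          · exact HasSubset.Subset.eventuallyLE hIocsub
        calc ∑ i ∈ Ioc 0 m, (a (i:ℝ) / a (j:ℝ) - 1)
            ≤ ∑ i ∈ Ioc 0 m, B ((i:ℝ)/(j:ℝ)) := Finset.sum_le_sum hterm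
        _ = ∑ k ∈ Finset.range m, B (((k:ℝ)+1)/(j:ℝ)) := hreindex
        _ ≤ ∑ k ∈ Finset.range m,
              (j:ℝ) * ∫ x in Set.Ioc ((k:ℝ)/(j:ℝ)) (((k:ℝ)+1)/(j:ℝ)), B x := by
            apply Finset.sum_le_sum
            intro k hk
            have hk' := Finset.mem_range.mp hk
            have h := mul_le_mul_of_nonneg_right (hpiece k hk') hj0.le
            rw [mul_assoc, one_div, inv_mul_cancel₀ hj0.ne', mul_one] at h
            linarith [h]
        _ = (j:ℝ) * ∑ k ∈ Finset.range m,
              ∫ x in Set.Ioc ((k:ℝ)/(j:ℝ)) (((k:ℝ)+1)/(j:ℝ)), B x := by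
            rw [Finset.mul_sum]
        _ = (j:ℝ) * ∫ x in Set.Ioc (0:ℝ) ((m:ℝ)/(j:ℝ)), B x := by
            congr 1
            have hconv : ∀ k ∈ Finset.range m,
                (∫ x in Set.Ioc ((k:ℝ)/(j:ℝ)) (((k:ℝ)+1)/(j:ℝ)), B x)
                  = ∫ x in ((k:ℝ)/(j:ℝ))..(((k:ℝ)+1)/(j:ℝ)), B x := by
              intro k _
              rw [intervalIntegral.integral_of_le (by gcongr <;> linarith)]
            rw [Finset.sum_congr rfl hconv, hadj,
              intervalIntegral.integral_of_le (by positivity)]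
        _ ≤ (j:ℝ) * ∫ x in Set.Ioc (0:ℝ) s0, B x := by
            apply mul_le_mul_of_nonneg_left hmono hj0.le
      -- tail part
      have htail : ∑ i ∈ Ioc m j, (a (i:ℝ) / a (j:ℝ) - 1)
          ≤ (j:ℝ) * (a (s0*(j:ℝ))/a (j:ℝ) - 1) := by
        have hterm : ∀ i ∈ Ioc m j, a (i:ℝ) / a (j:ℝ) - 1 ≤ a (s0*(j:ℝ))/a (j:ℝ) - 1 := by
          intro i hi
          obtain ⟨hmi, hij⟩ := Finset.mem_Ioc.mp hi
          have hi1 : 1 ≤ i := by omega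
          have hi0 : (0:ℝ) < i := by exact_mod_cast hi1
          have hs0i : s0 * (j:ℝ) ≤ (i:ℝ) := by
            have h1 : s0 * (j:ℝ) < (m:ℝ) + 1 := Nat.lt_floor_add_one _
            have h2 : (m:ℝ) + 1 ≤ (i:ℝ) := by exact_mod_cast hmi
            linarith
          have hai : a (i:ℝ) ≤ a (s0*(j:ℝ)) := by
            rcases eq_or_lt_of_le hs0i with h | h
            · rw [← h]
            · exact (anti (Set.mem_Ioi.mpr hs0j) (Set.mem_Ioi.mpr hi0) h).le
          gcongr
        calc ∑ i ∈ Ioc m j, (a (i:ℝ) / a (j:ℝ) - 1)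
            ≤ ∑ i ∈ Ioc m j, (a (s0*(j:ℝ))/a (j:ℝ) - 1) := Finset.sum_le_sum hterm
        _ = ((j - m : ℕ):ℝ) * (a (s0*(j:ℝ))/a (j:ℝ) - 1) := by
            rw [Finset.sum_const, Nat.card_Ioc, nsmul_eq_mul]
        _ ≤ (j:ℝ) * (a (s0*(j:ℝ))/a (j:ℝ) - 1) := by
            apply mul_le_mul_of_nonneg_right _ hbnd0
            exact_mod_cast Nat.sub_le j m
      rw [hsplit]
      rw [div_le_iff₀ hj0]
      have := add_le_add hhead htail
      linarith [this]
    rw [tendsto_order]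
    constructor
    · intro cc hcc
      filter_upwards [eventually_ge_atTop 1] with j hj
      have hj0 : (0:ℝ) < j := by exact_mod_cast hj
      have haj := hpos j hj
      have h1 := hlowr j hj
      rw [lt_div_iff₀ (by positivity)]
      nlinarith [h1, mul_lt_mul_of_pos_right hcc (mul_pos hj0 haj)]
    · intro cc hcc
      obtain ⟨mm, hmm⟩ := (hInt0.eventually
        (eventually_lt_nhds (by linarith : (0:ℝ) < (cc-1)/2))).exists
      set s0 : ℝ := 1/((mm:ℝ)+1) with hs0def
      have hs0 : s0 ∈ Set.Ioc (0:ℝ) 1 := by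
        constructor
        · positivity
        · rw [div_le_one (by positivity)]
          have : (0:ℝ) ≤ mm := Nat.cast_nonneg mm
          linarith
      have hlim := stmt12_svnat a s0 (hsv s0 hs0)
      have hev2 := hlim.eventually (eventually_lt_nhds
        (show (1:ℝ) < 1 + (cc-1)/2 by linarith))
      filter_upwards [hev2, eventually_ge_atTop 1] with j hy hj
      have hkey := hkeyineq s0 hs0 j hj
      have hj0 : (0:ℝ) < j := by exact_mod_cast hj
      have haj := hpos j hj
      linarith [hkey, hmm, hy]
  · -- r_n → ∞
    have hhalf := hsv (1/2) (by norm_num)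
    have hev : ∀ᶠ t : ℝ in atTop, a (t*(1/2))/a t < 4/3 :=
      hhalf.eventually (eventually_lt_nhds (by norm_num : (1:ℝ) < 4/3))
    obtain ⟨T0, hT0⟩ := eventually_atTop.mp hev
    set T : ℝ := max T0 2 with hTdef
    have hgrow : ∀ u : ℝ, T ≤ u → (3/4) * a u < a (2*u) := by
      intro u hu
      have hu2 : (2:ℝ) ≤ u := le_trans (le_max_right _ _) hu
      have hu0 : (0:ℝ) < u := by linarith
      have h := hT0 (2*u) (by
        have : T0 ≤ T := le_max_left _ _
        linarith)
      rw [show (2*u)*(1/2) = u by ring] at h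
      have h2u : 0 < a (2*u) := hapos _ (by linarith)
      rw [div_lt_iff₀ h2u] at h
      linarith
    set N0 : ℕ := ⌈T⌉₊ + 1 with hN0def
    have hN0T : T ≤ (N0:ℝ) := le_trans (Nat.le_ceil T) (by rw [hN0def]; push_cast; linarith)
    have hN01 : 1 ≤ N0 := by omega
    have hN0R : (1:ℝ) ≤ (N0:ℝ) := by exact_mod_cast hN01
    have haN0 : 0 < a (N0:ℝ) := hapos _ (by linarith)
    have hkey : ∀ k : ℕ, (3/4:ℝ)^k * a (N0:ℝ) ≤ a ((2^k * N0 : ℕ):ℝ) := by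
      intro k
      induction k with
      | zero => simp
      | succ k ih =>
        have hcast : ((2^(k+1) * N0 : ℕ):ℝ) = 2 * ((2^k * N0 : ℕ):ℝ) := by push_cast; ring
        have harg : T ≤ ((2^k * N0 : ℕ):ℝ) := by
          refine le_trans hN0T ?_
          have : N0 ≤ 2^k * N0 := Nat.le_mul_of_pos_left N0 (pow_pos two_pos k)
          exact_mod_cast this
        have hg := hgrow _ harg
        rw [hcast]
        calc (3/4:ℝ)^(k+1) * a (N0:ℝ) = (3/4) * ((3/4)^k * a (N0:ℝ)) := by ring
        _ ≤ (3/4) * a ((2^k*N0:ℕ):ℝ) := by linarith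
        _ ≤ a (2*((2^k*N0:ℕ):ℝ)) := hg.le
    have hrmono : Monotone (fun n : ℕ => ∑ i ∈ Icc 1 n, a (i:ℝ)) := by
      intro m n hmn
      apply Finset.sum_le_sum_of_subset_of_nonneg (Finset.Icc_subset_Icc le_rfl hmn)
      intro i hi _
      exact (hpos i (Finset.mem_Icc.mp hi).1).le
    have hsubb : ∀ k : ℕ, (3/2:ℝ)^k * ((N0:ℝ) * a (N0:ℝ))
        ≤ ∑ i ∈ Icc 1 (2^k*N0), a (i:ℝ) := by
      intro k
      have hk1 : 1 ≤ 2^k*N0 := Nat.one_le_iff_ne_zero.mpr (by positivity)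
      have h1 := hlowr (2^k*N0) hk1
      have h2 := hkey k
      have hcast : ((2^k*N0:ℕ):ℝ) = (2:ℝ)^k * (N0:ℝ) := by push_cast; ring
      calc (3/2:ℝ)^k * ((N0:ℝ) * a (N0:ℝ))
          = ((2:ℝ)^k * (N0:ℝ)) * ((3/4:ℝ)^k * a (N0:ℝ)) := by
            rw [show (3/2:ℝ)^k = (2:ℝ)^k * (3/4:ℝ)^k by rw [← mul_pow]; norm_num]
            ring
      _ ≤ ((2:ℝ)^k * (N0:ℝ)) * a ((2^k*N0:ℕ):ℝ) := by
            apply mul_le_mul_of_nonneg_left h2 (by positivity)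
      _ = ((2^k*N0:ℕ):ℝ) * a ((2^k*N0:ℕ):ℝ) := by rw [hcast]
      _ ≤ ∑ i ∈ Icc 1 (2^k*N0), a (i:ℝ) := h1
    have hφ : Tendsto ((fun n : ℕ => ∑ i ∈ Icc 1 n, a (i:ℝ)) ∘ (fun k : ℕ => 2^k * N0))
        atTop atTop := by
      apply tendsto_atTop_mono hsubb
      exact (tendsto_pow_atTop_atTop_of_one_lt (by norm_num : (1:ℝ) < 3/2)).atTop_mul_const
        (by positivity)
    exact tendsto_atTop_of_monotone_of_subseq hrmono hφ

end stmt12aux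

/-- Let `(X_i)` be any sequence in a finite set `E`, `a` a positive
continuous weight function, `a_i = a(i)`, `r_n = Σ_{i≤n} a_i`,
`v_n = (1/n)Σ_{i≤n} δ_{X_i}` and `w_n = (1/r_n)Σ_{i≤n} a_i δ_{X_i}`.  If either
(i) `a` is nondecreasing with `a(ts)/a(t) → 1` for every `s ∈ (0,1]`, or (ii) `a` is
decreasing with the same limit property and the domination `0 ≤ a(ts)/a(t) − 1 ≤ b(s)`
for an integrable `b` on `(0,1]`, then `max_x |w_n(x) − v_n(x)| → 0`. -/
theorem stmt12 {E : Type*} [Fintype E] [DecidableEq E] [Nonempty E]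
    (X : ℕ → E) (a : ℝ → ℝ)
    (hapos : ∀ t > (0:ℝ), 0 < a t)
    (hacont : ContinuousOn a (Set.Ioi (0:ℝ)))
    (hyp : (MonotoneOn a (Set.Ioi (0:ℝ)) ∧
            ∀ s ∈ Set.Ioc (0:ℝ) 1,
              Tendsto (fun t : ℝ => a (t * s) / a t) atTop (nhds 1)) ∨
           (StrictAntiOn a (Set.Ioi (0:ℝ)) ∧
            (∀ s ∈ Set.Ioc (0:ℝ) 1,
              Tendsto (fun t : ℝ => a (t * s) / a t) atTop (nhds 1)) ∧
            ∃ b : ℝ → ℝ, Measurable b ∧ (∀ s ∈ Set.Ioc (0:ℝ) 1, 0 ≤ b s) ∧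
              MeasureTheory.IntegrableOn b (Set.Ioc (0:ℝ) 1) MeasureTheory.volume ∧
              ∀ s ∈ Set.Ioc (0:ℝ) 1, ∀ t ≥ (1:ℝ),
                0 ≤ a (t * s) / a t - 1 ∧ a (t * s) / a t - 1 ≤ b s)) :
    Tendsto (fun n : ℕ => vecAbs (fun x =>
        (∑ i ∈ Finset.Icc 1 n, a i)⁻¹ *
          (∑ i ∈ Finset.Icc 1 n, a i * (if X i = x then (1:ℝ) else 0)) -
        (n : ℝ)⁻¹ * (∑ i ∈ Finset.Icc 1 n, (if X i = x then (1:ℝ) else 0))))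
      atTop (nhds 0) := by
  classical
  set A : ℕ → ℝ := fun i => a (i:ℝ) with hA
  have hApos : ∀ i : ℕ, 1 ≤ i → 0 < A i := fun i hi => hapos _ (by exact_mod_cast hi)
  -- extract the three analytic facts
  have hmain : Tendsto (fun j : ℕ => a ((j:ℝ)+1) / a (j:ℝ)) atTop (nhds 1) ∧
      Tendsto (fun j : ℕ => (∑ i ∈ Finset.Icc 1 j, a (i:ℝ)) / ((j:ℝ) * a (j:ℝ)))
        atTop (nhds 1) ∧
      Tendsto (fun n : ℕ => ∑ i ∈ Finset.Icc 1 n, a (i:ℝ)) atTop atTop := by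
    rcases hyp with ⟨mono, hsv⟩ | ⟨anti, hsv, b, hbmeas, hb0, hbint, hdom⟩
    · exact stmt12_case1 a hapos mono hsv
    · exact stmt12_case2 a hapos anti hsv b hbmeas hb0 hbint hdom
  obtain ⟨hstep, hratio, hrtop⟩ := hmain
  set c : ℕ → ℝ := fun j => |(∑ i ∈ Finset.Icc 1 j, A i)/(j:ℝ) - A (j+1)| with hcdef
  have hc0 : Tendsto (fun j : ℕ => c j / A j) atTop (nhds 0) := by
    have hsub : Tendsto (fun j : ℕ =>
        (∑ i ∈ Finset.Icc 1 j, a (i:ℝ)) / ((j:ℝ) * a (j:ℝ)) - a ((j:ℝ)+1) / a (j:ℝ))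
        atTop (nhds (1 - 1)) := hratio.sub hstep
    rw [sub_self] at hsub
    have habs := hsub.abs
    rw [abs_zero] at habs
    apply habs.congr'
    filter_upwards [eventually_ge_atTop 1] with j hj
    have hj0 : (0:ℝ) < j := by exact_mod_cast hj
    have haj : 0 < A j := hApos j hj
    have hcast : A (j+1) = a ((j:ℝ)+1) := by
      simp only [hA]
      norm_num
    rw [hcdef]
    simp only
    rw [hcast, ← abs_of_pos haj, ← abs_div]
    congr 1
    simp only [hA] at haj ⊢
    field_simp
  have hfinal := stmt12_cesaro A c hApos (fun j => abs_nonneg _) hc0 hrtop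
  -- squeeze
  apply tendsto_of_tendsto_of_tendsto_of_le_of_le' tendsto_const_nhds hfinal
  · filter_upwards with n
    exact stmt12_vecAbs_nonneg _
  · filter_upwards [eventually_ge_atTop 1] with n hn
    obtain ⟨m, rfl⟩ : ∃ m, n = m + 1 := ⟨n-1, by omega⟩
    apply stmt12_vecAbs_le
    intro x
    have hb := stmt12_bound A (fun i => if X i = x then (1:ℝ) else 0)
      (fun i => by by_cases h : X i = x <;> simp [h]) hApos m
    have hcast : ((m+1 : ℕ):ℝ) = (m:ℝ)+1 := by push_cast; ring
    rw [hcast]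
    convert hb using 3 <;> simp [hcdef]
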